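/- Consider the system F = (f_1,...,f_{n+1}) in variables X_1,...,X_{n+1} given by f_1 = X_1 - 2, f_i = X_i - X_{i-1}^2 for 2 ≤ i ≤ n-1, f_n = X_{n+1} - X_n^2, and f_{n+1} = X_{n+1} X_n - 2(X_{n-1} X_n - 1)^2. Then F has exactly three solutions in ℂ^{n+1}, and two of them, ζ_1, ζ_2 ∈ ℝ^{n+1}, satisfy ||ζ_1 - ζ_2|| ≤ 2 / 2^{(2^{n-2} · 5)/2} ≤ 2 / 2^{2^{n-1}}. -/

import Mathlib

/-! A multivariate Mignotte-type example: a quadratic system with three solutions,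
two of which are doubly exponentially close. -/

open MvPolynomial
open Fin.NatCast

/-- Evaluation of a square system of polynomials. -/
noncomputable def evalSys {n : ℕ} {R : Type*} [CommRing R]
    (F : Fin n → MvPolynomial (Fin n) R) (x : Fin n → R) : Fin n → R :=
  fun i => MvPolynomial.eval x (F i)

/-- Hermitian (Euclidean) norm on `ℂⁿ`. -/
noncomputable def eNorm {m : ℕ} (x : Fin m → ℂ) : ℝ :=
  Real.sqrt (∑ i, ‖x i‖ ^ 2)

/-- The Mignotte-type system `f₁ = X₁ - 2`, `fᵢ = Xᵢ - Xᵢ₋₁²` (`2 ≤ i ≤ n-1`),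
`fₙ = Xₙ₊₁ - Xₙ²`, `fₙ₊₁ = Xₙ₊₁Xₙ - 2(Xₙ₋₁Xₙ - 1)²` (variables `0`-indexed). -/
noncomputable def mignotteSys (n : ℕ) : Fin (n + 1) → MvPolynomial (Fin (n + 1)) ℤ :=
  fun j =>
    if j.val = 0 then X 0 - 2
    else if j.val ≤ n - 2 then X j - X ((j.val - 1 : ℕ) : Fin (n + 1)) ^ 2
    else if j.val = n - 1 then
      X ((n : ℕ) : Fin (n + 1)) - X ((n - 1 : ℕ) : Fin (n + 1)) ^ 2
    else
      X ((n : ℕ) : Fin (n + 1)) * X ((n - 1 : ℕ) : Fin (n + 1)) -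
        2 * (X ((n - 2 : ℕ) : Fin (n + 1)) * X ((n - 1 : ℕ) : Fin (n + 1)) - 1) ^ 2

/- ### Auxiliary lemmas -/

set_option maxHeartbeats 1000000 in
/-- The cubic `t³ = 2(b²t - 1)²` has three roots located in explicit disjoint intervals. -/
lemma mignotte_cubic_roots (b : ℝ) (hb : 2 ≤ b) :
    ∃ t1 t2 t3 : ℝ,
      (1/b^2 - (17/20)/b^5 < t1 ∧ t1 < 1/b^2) ∧
      (1/b^2 < t2 ∧ t2 < 1/b^2 + (17/20)/b^5) ∧
      (1/b^2 + (17/20)/b^5 < t3) ∧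
      t1^3 = 2*(b^2*t1-1)^2 ∧ t2^3 = 2*(b^2*t2-1)^2 ∧ t3^3 = 2*(b^2*t3-1)^2 := by
  have hb0 : (0:ℝ) < b := by linarith
  have hbne : b ≠ 0 := ne_of_gt hb0
  set f : ℝ → ℝ := fun t => t^3 - 2*(b^2*t-1)^2 with hf
  have hcont : Continuous f := by fun_prop
  have hb5 : (0:ℝ) < b^5 := by positivity
  have hb4 : (4:ℝ) ≤ b^2 := by nlinarith
  have hb8 : (8:ℝ) ≤ b^3 := by nlinarith [mul_le_mul hb hb4 (by norm_num : (0:ℝ) ≤ 4) hb0.le]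
  set s : ℝ := (17/20)/b^5 with hs
  have hs0 : 0 < s := by positivity
  have hmid_pos : 0 < f (1/b^2) := by
    have : f (1/b^2) = 1/b^6 := by simp only [hf]; field_simp; ring
    rw [this]; positivity
  have hlo_neg : f (1/b^2 - s) < 0 := by
    simp only [hf, hs]
    have key : (b^3 - 17/20)^3 < (289/200) * b^9 := by
      have hc : (0:ℝ) ≤ b^3 - 17/20 := by linarith
      have h1 : (b^3 - 17/20)^3 ≤ (b^3)^3 := pow_le_pow_left₀ hc (by linarith) 3
      have h2 : (b^3)^3 = b^9 := by ring
      have h9 : (0:ℝ) < b^9 := by positivity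
      nlinarith
    have e1 : 1/b^2 - 17/20/b^5 = (b^3 - 17/20)/b^5 := by field_simp
    have e2 : b^2 * (1/b^2 - 17/20/b^5) - 1 = -(17/20/b^3) := by field_simp; ring
    rw [e2, e1]
    rw [neg_sq, div_pow, div_pow, sub_neg, div_lt_iff₀ (by positivity : (0:ℝ) < (b^5)^3)]
    have e3 : 2*((17/20)^2/(b^3)^2) * (b^5)^3 = (289/200)*b^9 := by field_simp; ring
    rw [e3]; exact key
  have hhi_neg : f (1/b^2 + s) < 0 := by
    simp only [hf, hs]
    have key : (b^3 + 17/20)^3 < (289/200) * b^9 := by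
      have h17 : (17/20 : ℝ) ≤ (17/160) * b^3 := by linarith
      have h3 : (b^3 + 17/20)^3 ≤ ((177/160) * b^3)^3 := by
        apply pow_le_pow_left₀ (by positivity)
        linarith
      have h4 : ((177/160) * b^3)^3 < (289/200) * b^9 := by
        have h9 : (0:ℝ) < b^9 := by positivity
        nlinarith
      linarith
    have e1 : 1/b^2 + 17/20/b^5 = (b^3 + 17/20)/b^5 := by field_simp
    have e2 : b^2 * (1/b^2 + 17/20/b^5) - 1 = 17/20/b^3 := by field_simp; ring
    rw [e2, e1]
    rw [div_pow, div_pow, sub_neg, div_lt_iff₀ (by positivity : (0:ℝ) < (b^5)^3)]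
    have e3 : 2*((17/20)^2/(b^3)^2) * (b^5)^3 = (289/200)*b^9 := by field_simp; ring
    rw [e3]; exact key
  have h2a_neg : f (2/b^2) < 0 := by
    simp only [hf]
    have e2 : b^2 * (2/b^2) - 1 = 1 := by field_simp; norm_num
    rw [e2]
    have h1 : (2/b^2)^3 ≤ (2/4)^3 := by
      apply pow_le_pow_left₀ (by positivity)
      rw [div_le_div_iff₀ (by positivity) (by norm_num)]
      nlinarith
    norm_num at h1 ⊢
    linarith
  have h2a2_pos : 0 < f (2*(b^2)^2) := by
    simp only [hf]
    nlinarith [pow_pos hb0 6, pow_pos hb0 3]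
  have hord1 : 1/b^2 - s < 1/b^2 := by linarith
  have hord2 : 1/b^2 < 1/b^2 + s := by linarith
  have hord3 : (1:ℝ)/b^2 + s < 2/b^2 := by
    have : s < 1/b^2 := by
      rw [hs, div_lt_div_iff₀ hb5 (by positivity : (0:ℝ) < b^2)]
      nlinarith [mul_le_mul_of_nonneg_left hb8 (by positivity : (0:ℝ) ≤ b^2)]
    have e : 2/b^2 = 1/b^2 + 1/b^2 := by ring
    linarith
  have hord4 : 2/b^2 < 2*(b^2)^2 := by
    have l1 : 2/b^2 ≤ 2 := by
      rw [div_le_iff₀ (by positivity : (0:ℝ) < b^2)]; nlinarith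
    have l2 : (2:ℝ) < 2*(b^2)^2 := by nlinarith
    linarith
  have i1 : (0:ℝ) ∈ f '' Set.Ioo (1/b^2 - s) (1/b^2) :=
    intermediate_value_Ioo (le_of_lt hord1) hcont.continuousOn ⟨hlo_neg, hmid_pos⟩
  have i2 : (0:ℝ) ∈ f '' Set.Ioo (1/b^2) (1/b^2 + s) :=
    intermediate_value_Ioo' (le_of_lt hord2) hcont.continuousOn ⟨hhi_neg, hmid_pos⟩
  have i3 : (0:ℝ) ∈ f '' Set.Ioo (2/b^2) (2*(b^2)^2) :=
    intermediate_value_Ioo (le_of_lt hord4) hcont.continuousOn ⟨h2a_neg, h2a2_pos⟩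
  obtain ⟨t1, ht1, hft1⟩ := i1
  obtain ⟨t2, ht2, hft2⟩ := i2
  obtain ⟨t3, ht3, hft3⟩ := i3
  simp only [hf] at hft1 hft2 hft3
  exact ⟨t1, t2, t3, ⟨ht1.1, ht1.2⟩, ⟨ht2.1, ht2.2⟩, lt_trans hord3 ht3.1,
    by linarith, by linarith, by linarith⟩

lemma migEval0 (n : ℕ) (x : Fin (n+1) → ℂ) (j : Fin (n+1)) (hj : j.val = 0) :
    MvPolynomial.eval x ((mignotteSys n j).map (Int.castRingHom ℂ)) = x j - 2 := by
  have hj' : j = 0 := Fin.ext (by simpa using hj)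
  subst hj'
  simp only [mignotteSys, if_pos]
  simp

lemma migEvalMid (n : ℕ) (x : Fin (n+1) → ℂ) (j : Fin (n+1)) (hj0 : ¬ j.val = 0)
    (hj : j.val ≤ n - 2) :
    MvPolynomial.eval x ((mignotteSys n j).map (Int.castRingHom ℂ)) =
      x j - x ((j.val - 1 : ℕ) : Fin (n+1)) ^ 2 := by
  simp only [mignotteSys, if_neg hj0, if_pos hj]
  simp

lemma migEvalPen (n : ℕ) (hn : 3 ≤ n) (x : Fin (n+1) → ℂ) (j : Fin (n+1)) (hj : j.val = n - 1) :
    MvPolynomial.eval x ((mignotteSys n j).map (Int.castRingHom ℂ)) =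
      x ((n:ℕ) : Fin (n+1)) - x ((n-1 : ℕ) : Fin (n+1)) ^ 2 := by
  have h1 : ¬ (j.val = 0) := by omega
  have h2 : ¬ (j.val ≤ n - 2) := by omega
  simp only [mignotteSys, if_neg h1, if_neg h2, if_pos hj]
  simp

lemma migEvalLast (n : ℕ) (hn : 3 ≤ n) (x : Fin (n+1) → ℂ) (j : Fin (n+1)) (hj : j.val = n) :
    MvPolynomial.eval x ((mignotteSys n j).map (Int.castRingHom ℂ)) =
      x ((n:ℕ) : Fin (n+1)) * x ((n-1 : ℕ) : Fin (n+1)) -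
        2 * (x ((n-2 : ℕ) : Fin (n+1)) * x ((n-1 : ℕ) : Fin (n+1)) - 1) ^ 2 := by
  have h1 : ¬ (j.val = 0) := by omega
  have h2 : ¬ (j.val ≤ n - 2) := by omega
  have h3 : ¬ (j.val = n - 1) := by omega
  simp only [mignotteSys, if_neg h1, if_neg h2, if_neg h3]
  simp

/-- Candidate solution vector parametrized by the value `t` of variable `n-1`. -/
noncomputable def mSol (n : ℕ) (t : ℂ) : Fin (n + 1) → ℂ :=
  fun j => if j.val ≤ n - 2 then (2:ℂ)^(2^j.val) else if j.val = n - 1 then t else t^2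

lemma mSol_cast (n k : ℕ) (hk : k ≤ n) (t : ℂ) :
    mSol n t ((k : ℕ) : Fin (n+1)) =
      if k ≤ n - 2 then (2:ℂ)^(2^k) else if k = n - 1 then t else t^2 := by
  have h : ((k : Fin (n+1)) : ℕ) = k := Fin.val_cast_of_lt (by omega)
  simp only [mSol, h]

lemma mem_iff (n : ℕ) (hn : 3 ≤ n) (x : Fin (n+1) → ℂ) :
    evalSys (fun j => (mignotteSys n j).map (Int.castRingHom ℂ)) x = 0 ↔
      ∃ t : ℂ, t^3 = 2 * ((2:ℂ)^(2^(n-2)) * t - 1)^2 ∧ x = mSol n t := by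
  constructor
  · intro h
    have hx : ∀ j, MvPolynomial.eval x ((mignotteSys n j).map (Int.castRingHom ℂ)) = 0 :=
      fun j => congrFun h j
    have chain : ∀ k, k ≤ n - 2 → x ((k : ℕ) : Fin (n+1)) = 2^(2^k) := by
      intro k
      induction k with
      | zero =>
        intro _
        have h0 := hx 0
        rw [migEval0 n x 0 rfl, sub_eq_zero] at h0
        simpa using h0
      | succ k ih =>
        intro hk
        have ihv := ih (by omega)
        set j : Fin (n+1) := ((k+1 : ℕ) : Fin (n+1)) with hjdef
        have hjv : j.val = k + 1 := Fin.val_cast_of_lt (by omega)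
        have h1 := hx j
        rw [migEvalMid n x j (by omega) (by omega), sub_eq_zero, hjv] at h1
        have hk1 : k + 1 - 1 = k := by omega
        rw [hk1] at h1
        rw [h1, ihv, ← pow_mul, ← pow_succ]
    set t : ℂ := x ((n-1 : ℕ) : Fin (n+1)) with htdef
    have hpen := hx ((n-1 : ℕ) : Fin (n+1))
    rw [migEvalPen n hn x _ (Fin.val_cast_of_lt (by omega)), sub_eq_zero] at hpen
    have hlast := hx ((n : ℕ) : Fin (n+1))
    rw [migEvalLast n hn x _ (Fin.val_cast_of_lt (by omega)), sub_eq_zero] at hlast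
    rw [chain (n-2) le_rfl] at hlast
    rw [hpen, ← htdef] at hlast
    refine ⟨t, by rw [← hlast]; ring, ?_⟩
    funext j
    by_cases h1 : j.val ≤ n - 2
    · have hj' : j = ((j.val : ℕ) : Fin (n+1)) := (Fin.cast_val_eq_self j).symm
      rw [hj', chain j.val h1, mSol_cast n j.val (by omega), if_pos h1]
    · by_cases h2 : j.val = n - 1
      · have hj' : j = ((n-1 : ℕ) : Fin (n+1)) :=
          Fin.ext (by rw [Fin.val_cast_of_lt (by omega)]; exact h2)
        rw [hj', mSol_cast n (n-1) (by omega), if_neg (by omega), if_pos rfl]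
      · have h3 : j.val = n := by have := j.isLt; omega
        have hj' : j = ((n : ℕ) : Fin (n+1)) :=
          Fin.ext (by rw [Fin.val_cast_of_lt (by omega)]; exact h3)
        rw [hj', mSol_cast n n le_rfl, if_neg (by omega), if_neg (by omega)]
        exact hpen
  · rintro ⟨t, ht, rfl⟩
    funext j
    simp only [evalSys, Pi.zero_apply]
    by_cases h1 : j.val = 0
    · rw [migEval0 n _ j h1]
      simp only [mSol, h1]
      norm_num
    · by_cases h2 : j.val ≤ n - 2
      · rw [migEvalMid n _ j h1 h2]
        have hv1 : mSol n t j = 2^(2^j.val) := by simp only [mSol, if_pos h2]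
        have hv2 : mSol n t ((j.val - 1 : ℕ) : Fin (n+1)) = 2^(2^(j.val - 1)) := by
          rw [mSol_cast n (j.val - 1) (by omega), if_pos (by omega)]
        rw [hv1, hv2, sub_eq_zero, ← pow_mul]
        congr 1
        rw [← pow_succ]
        congr 1
        omega
      · by_cases h3 : j.val = n - 1
        · rw [migEvalPen n hn _ j h3]
          have hv1 : mSol n t ((n : ℕ) : Fin (n+1)) = t^2 := by
            rw [mSol_cast n n le_rfl, if_neg (by omega), if_neg (by omega)]
          have hv2 : mSol n t ((n-1 : ℕ) : Fin (n+1)) = t := by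
            rw [mSol_cast n (n-1) (by omega), if_neg (by omega), if_pos rfl]
          rw [hv1, hv2, sub_self]
        · have h4 : j.val = n := by have := j.isLt; omega
          rw [migEvalLast n hn _ j h4]
          have hv1 : mSol n t ((n : ℕ) : Fin (n+1)) = t^2 := by
            rw [mSol_cast n n le_rfl, if_neg (by omega), if_neg (by omega)]
          have hv2 : mSol n t ((n-1 : ℕ) : Fin (n+1)) = t := by
            rw [mSol_cast n (n-1) (by omega), if_neg (by omega), if_pos rfl]
          have hv3 : mSol n t ((n-2 : ℕ) : Fin (n+1)) = (2:ℂ)^(2^(n-2)) := by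
            rw [mSol_cast n (n-2) (by omega), if_pos le_rfl]
          rw [hv1, hv2, hv3]
          linear_combination ht

lemma mSol_injective (n : ℕ) (hn : 3 ≤ n) : Function.Injective (mSol n) := by
  intro u v huv
  have h := congrFun huv ((n-1 : ℕ) : Fin (n+1))
  rwa [mSol_cast n (n-1) (by omega), mSol_cast n (n-1) (by omega),
    if_neg (by omega), if_pos rfl, if_neg (by omega), if_pos rfl] at h

lemma root_card (A t1 t2 t3 : ℂ) (h12 : t1 ≠ t2) (h13 : t1 ≠ t3) (h23 : t2 ≠ t3)
    (e1 : t1^3 = 2*(A*t1-1)^2) (e2 : t2^3 = 2*(A*t2-1)^2) (e3 : t3^3 = 2*(A*t3-1)^2) :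
    {t : ℂ | t^3 = 2*(A*t-1)^2}.ncard = 3 := by
  set Q : Polynomial ℂ :=
    Polynomial.X^3 - Polynomial.C 2 * (Polynomial.C A * Polynomial.X - 1)^2 with hQ
  have heval : ∀ t, Q.eval t = t^3 - 2*(A*t-1)^2 := by
    intro t; simp [hQ]
  have hdeg : Q.natDegree = 3 := by
    rw [hQ]
    compute_degree!
  have hQ0 : Q ≠ 0 := by
    intro h0
    rw [h0] at hdeg
    simp at hdeg
  have hset : {t : ℂ | t^3 = 2*(A*t-1)^2} = ↑Q.roots.toFinset := by
    ext u
    simp only [Set.mem_setOf_eq, Finset.coe_sort_coe, Multiset.mem_toFinset,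
      Finset.mem_coe, Polynomial.mem_roots hQ0, Polynomial.IsRoot, heval, sub_eq_zero]
  rw [hset, Set.ncard_coe_finset]
  have hle : Q.roots.toFinset.card ≤ 3 :=
    le_trans (Multiset.toFinset_card_le _) (le_trans (Polynomial.card_roots' Q) hdeg.le)
  have hmem : ∀ u, u^3 = 2*(A*u-1)^2 → u ∈ Q.roots.toFinset := by
    intro u hu
    rw [Multiset.mem_toFinset, Polynomial.mem_roots hQ0, Polynomial.IsRoot, heval, hu]
    ring
  have hsub : ({t1, t2, t3} : Finset ℂ) ⊆ Q.roots.toFinset := by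
    intro u hu
    simp only [Finset.mem_insert, Finset.mem_singleton] at hu
    rcases hu with rfl | rfl | rfl
    · exact hmem _ e1
    · exact hmem _ e2
    · exact hmem _ e3
  have hcard : ({t1, t2, t3} : Finset ℂ).card = 3 := by
    rw [Finset.card_insert_of_notMem (by simp [h12, h13]),
      Finset.card_insert_of_notMem (by simp [h23]), Finset.card_singleton]
  have hge : 3 ≤ Q.roots.toFinset.card := hcard ▸ Finset.card_le_card hsub
  omega

lemma mSol_im (n : ℕ) (r : ℝ) (i : Fin (n+1)) : (mSol n ((r:ℝ):ℂ) i).im = 0 := by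
  unfold mSol
  split_ifs
  · rw [show (2:ℂ)^(2^i.val) = (((2:ℝ)^(2^i.val) : ℝ):ℂ) by push_cast; ring]
    exact Complex.ofReal_im _
  · exact Complex.ofReal_im _
  · rw [← Complex.ofReal_pow]
    exact Complex.ofReal_im _

lemma pow_id (n : ℕ) :
    (2:ℝ) ^ (((2:ℝ)^(n-2) * 5)/2) = (Real.sqrt ((2:ℝ)^(2^(n-2))))^5 := by
  have ha : (0:ℝ) ≤ (2:ℝ) ^ (2^(n-2) : ℕ) := by positivity
  rw [Real.sqrt_eq_rpow, ← Real.rpow_natCast (((2:ℝ)^(2^(n-2):ℕ)) ^ ((1:ℝ)/2)) 5,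
    ← Real.rpow_mul ha, ← Real.rpow_natCast (2:ℝ) (2^(n-2)),
    ← Real.rpow_mul (by norm_num : (0:ℝ) ≤ 2)]
  congr 1
  push_cast
  ring

lemma second_ineq (n : ℕ) (hn : 3 ≤ n) :
    2 / (2:ℝ) ^ (((2:ℝ)^(n-2) * 5)/2) ≤ 2 / (2:ℝ) ^ ((2:ℝ)^(n-1)) := by
  have hexp : (2:ℝ)^(n-1) ≤ ((2:ℝ)^(n-2) * 5)/2 := by
    have h1 : n - 1 = (n-2) + 1 := by omega
    rw [h1, pow_succ]
    have h2 : (0:ℝ) < 2^(n-2) := by positivity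
    linarith
  have h1 : (0:ℝ) < (2:ℝ) ^ ((2:ℝ)^(n-1)) := Real.rpow_pos_of_pos two_pos _
  have h2 : (2:ℝ) ^ ((2:ℝ)^(n-1)) ≤ (2:ℝ) ^ (((2:ℝ)^(n-2) * 5)/2) :=
    Real.rpow_le_rpow_of_exponent_le one_le_two hexp
  exact div_le_div_of_nonneg_left (by norm_num) h1 h2

set_option maxHeartbeats 2000000 in
/-- The Mignotte-type system has exactly three complex solutions, two of which are real
and doubly exponentially close to each other. -/
theorem mignotte_example (n : ℕ) (hn : 3 ≤ n) :
    Set.ncard {x : Fin (n + 1) → ℂ |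
        evalSys (fun j => (mignotteSys n j).map (Int.castRingHom ℂ)) x = 0} = 3 ∧
    ∃ ζ₁ ζ₂ : Fin (n + 1) → ℂ, ζ₁ ≠ ζ₂ ∧
      (∀ i, (ζ₁ i).im = 0) ∧ (∀ i, (ζ₂ i).im = 0) ∧
      evalSys (fun j => (mignotteSys n j).map (Int.castRingHom ℂ)) ζ₁ = 0 ∧
      evalSys (fun j => (mignotteSys n j).map (Int.castRingHom ℂ)) ζ₂ = 0 ∧
      eNorm (ζ₁ - ζ₂) ≤ 2 / (2 : ℝ) ^ (((2 : ℝ) ^ (n - 2) * 5) / 2) ∧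
      2 / (2 : ℝ) ^ (((2 : ℝ) ^ (n - 2) * 5) / 2) ≤ 2 / (2 : ℝ) ^ ((2 : ℝ) ^ (n - 1)) := by
  -- setup
  set a : ℝ := (2:ℝ) ^ (2^(n-2) : ℕ) with hadef
  have hexp2 : 2 ≤ 2^(n-2) := by
    calc 2 = 2^1 := (pow_one 2).symm
    _ ≤ 2^(n-2) := Nat.pow_le_pow_right (by norm_num) (by omega)
  have ha4 : (4:ℝ) ≤ a := by
    rw [hadef]
    calc (4:ℝ) = 2^2 := by norm_num
    _ ≤ 2^(2^(n-2)) := pow_le_pow_right₀ one_le_two hexp2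
  have ha0 : (0:ℝ) < a := by positivity
  set b : ℝ := Real.sqrt a with hbdef
  have hb0 : 0 ≤ b := Real.sqrt_nonneg a
  have hab : b^2 = a := Real.sq_sqrt ha0.le
  have hb2 : (2:ℝ) ≤ b := by nlinarith
  obtain ⟨t1, t2, t3, ht1, ht2, ht3, e1, e2, e3⟩ := mignotte_cubic_roots b hb2
  rw [hab] at ht1 ht2 ht3 e1 e2 e3
  -- complex constants
  set A : ℂ := (2:ℂ)^(2^(n-2) : ℕ) with hAdef
  have hAa : A = ((a:ℝ):ℂ) := by rw [hAdef, hadef]; push_cast; ring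
  have hc : ∀ u : ℝ, u^3 = 2*(a*u-1)^2 → ((u:ℝ):ℂ)^3 = 2*(A*((u:ℝ):ℂ)-1)^2 := by
    intro u hu
    rw [hAa]
    exact_mod_cast congrArg (fun r : ℝ => ((r:ℝ):ℂ)) hu
  have ec1 := hc t1 e1
  have ec2 := hc t2 e2
  have ec3 := hc t3 e3
  -- ordering / distinctness
  have hlt12 : t1 < t2 := lt_trans ht1.2 ht2.1
  have hlt23 : t2 < t3 := lt_trans ht2.2 ht3
  have h12 : ((t1:ℝ):ℂ) ≠ ((t2:ℝ):ℂ) := by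
    simp only [ne_eq, Complex.ofReal_inj]; exact ne_of_lt hlt12
  have h13 : ((t1:ℝ):ℂ) ≠ ((t3:ℝ):ℂ) := by
    simp only [ne_eq, Complex.ofReal_inj]; exact ne_of_lt (lt_trans hlt12 hlt23)
  have h23 : ((t2:ℝ):ℂ) ≠ ((t3:ℝ):ℂ) := by
    simp only [ne_eq, Complex.ofReal_inj]; exact ne_of_lt hlt23
  -- the solution set
  have hsetE : {x : Fin (n + 1) → ℂ |
      evalSys (fun j => (mignotteSys n j).map (Int.castRingHom ℂ)) x = 0} =
      mSol n '' {t : ℂ | t^3 = 2*(A*t-1)^2} := by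
    ext x
    rw [Set.mem_setOf_eq, mem_iff n hn x]
    constructor
    · rintro ⟨t, ht, rfl⟩
      exact ⟨t, ht, rfl⟩
    · rintro ⟨t, ht, rfl⟩
      exact ⟨t, ht, rfl⟩
  constructor
  · rw [hsetE, Set.ncard_image_of_injective _ (mSol_injective n hn)]
    exact root_card A _ _ _ h12 h13 h23 ec1 ec2 ec3
  -- the two close solutions
  · refine ⟨mSol n ((t1:ℝ):ℂ), mSol n ((t2:ℝ):ℂ),
      fun h => h12 (mSol_injective n hn h), mSol_im n t1, mSol_im n t2,
      (mem_iff n hn _).mpr ⟨_, ec1, rfl⟩, (mem_iff n hn _).mpr ⟨_, ec2, rfl⟩, ?_, second_ineq n hn⟩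
    rw [pow_id n, ← hbdef]
    -- now bound eNorm by 2 / b^5
    have hb5 : (0:ℝ) < b^5 := by positivity
    set s : ℝ := (17/20)/b^5 with hs
    -- numeric bounds on t1, t2
    have hsa : s < 1/a := by
      rw [hs, ← hab, div_lt_div_iff₀ hb5 (by positivity : (0:ℝ) < b^2)]
      have hb8 : (8:ℝ) ≤ b^3 := by nlinarith
      nlinarith [mul_le_mul_of_nonneg_left hb8 (by positivity : (0:ℝ) ≤ b^2)]
    have h1a4 : 1/a ≤ 1/4 := by
      rw [div_le_div_iff₀ ha0 (by norm_num)]; linarith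
    have hs17 : s ≤ 17/640 := by
      rw [hs, div_le_div_iff₀ hb5 (by norm_num)]
      have hb32 : (32:ℝ) ≤ b^5 := by nlinarith [pow_le_pow_left₀ (by norm_num : (0:ℝ) ≤ 2) hb2 5]
      linarith
    have hd : t2 - t1 ≤ (17/10)/b^5 := by
      have : (17/10)/b^5 = s + s := by rw [hs]; ring
      rw [this]
      have l1 := ht1.1
      have l2 := ht2.2
      linarith
    have hd0 : 0 < t2 - t1 := by linarith
    have ht1pos : 0 < t1 := by
      have := ht1.1
      linarith
    have hu : t1 + t2 ≤ 337/640 := by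
      have l1 := ht1.2
      have l2 := ht2.2
      linarith
    have hu0 : 0 < t1 + t2 := by
      have := ht2.1
      have : 0 < t2 := by linarith [lt_trans (by linarith : (0:ℝ) < 1/a) ht2.1]
      linarith
    -- the sum over coordinates
    set ζ₁ : Fin (n+1) → ℂ := mSol n ((t1:ℝ):ℂ) with hz1
    set ζ₂ : Fin (n+1) → ℂ := mSol n ((t2:ℝ):ℂ) with hz2
    set i1 : Fin (n+1) := ((n-1 : ℕ) : Fin (n+1)) with hi1
    set i2 : Fin (n+1) := ((n : ℕ) : Fin (n+1)) with hi2
    have hi1v : i1.val = n - 1 := Fin.val_cast_of_lt (by omega)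
    have hi2v : i2.val = n := Fin.val_cast_of_lt (by omega)
    have hine : i1 ≠ i2 := by
      intro h
      have he : (n - 1 : ℕ) = n := by rw [← hi1v, h, hi2v]
      omega
    have hval1 : (ζ₁ - ζ₂) i1 = (((t1 - t2 : ℝ)):ℂ) := by
      rw [Pi.sub_apply, hz1, hz2, hi1, mSol_cast n (n-1) (by omega),
        mSol_cast n (n-1) (by omega), if_neg (by omega), if_pos rfl,
        if_neg (by omega), if_pos rfl]
      push_cast; ring
    have hval2 : (ζ₁ - ζ₂) i2 = (((t1^2 - t2^2 : ℝ)):ℂ) := by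
      rw [Pi.sub_apply, hz1, hz2, hi2, mSol_cast n n le_rfl,
        mSol_cast n n le_rfl, if_neg (by omega), if_neg (by omega),
        if_neg (by omega), if_neg (by omega)]
      push_cast; ring
    have hzero : ∀ i : Fin (n+1), i ∉ ({i1, i2} : Finset (Fin (n+1))) →
        ‖(ζ₁ - ζ₂) i‖^2 = 0 := by
      intro i hi
      simp only [Finset.mem_insert, Finset.mem_singleton] at hi
      push_neg at hi
      have hiv : i.val ≤ n - 2 := by
        have h1 : i.val ≠ n - 1 := fun h => hi.1 (Fin.ext (by rw [hi1v]; exact h))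
        have h2 : i.val ≠ n := fun h => hi.2 (Fin.ext (by rw [hi2v]; exact h))
        have := i.isLt
        omega
      rw [Pi.sub_apply, hz1, hz2]
      simp only [mSol, if_pos hiv]
      simp
    have hsum : ∑ i, ‖(ζ₁ - ζ₂) i‖^2 = (t1 - t2)^2 + (t1^2 - t2^2)^2 := by
      rw [← Finset.sum_subset (Finset.subset_univ ({i1, i2} : Finset (Fin (n+1))))
        (fun i _ hi => hzero i hi)]
      rw [Finset.sum_pair hine, hval1, hval2]
      rw [Complex.norm_real, Complex.norm_real, Real.norm_eq_abs, Real.norm_eq_abs,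
        sq_abs, sq_abs]
    have key : (t1 - t2)^2 + (t1^2 - t2^2)^2 ≤ (2/b^5)^2 := by
      have hfact : (t1^2 - t2^2)^2 = (t1+t2)^2 * (t1-t2)^2 := by ring
      have hd2 : (t1 - t2)^2 ≤ ((17/10)/b^5)^2 := by
        rw [show (t1-t2)^2 = (t2-t1)^2 by ring]
        exact pow_le_pow_left₀ hd0.le hd 2
      have hu2 : (t1+t2)^2 ≤ (337/640)^2 := pow_le_pow_left₀ hu0.le hu 2
      have hstep : (t1+t2)^2 * (t1-t2)^2 ≤ (337/640)^2 * ((17/10)/b^5)^2 :=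
        mul_le_mul hu2 hd2 (sq_nonneg _) (by positivity)
      have hfinal : ((17/10)/b^5)^2 + (337/640)^2 * ((17/10)/b^5)^2 ≤ (2/b^5)^2 := by
        have hY : (0:ℝ) ≤ (1/b^5)^2 := sq_nonneg _
        have eA : ((17/10)/b^5)^2 = (289/100)*(1/b^5)^2 := by ring
        have eB : (2/b^5)^2 = 4*(1/b^5)^2 := by ring
        rw [eA, eB]
        nlinarith [hY]
      calc (t1 - t2)^2 + (t1^2 - t2^2)^2
          ≤ ((17/10)/b^5)^2 + (337/640)^2 * ((17/10)/b^5)^2 := by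
            rw [hfact]; exact add_le_add hd2 hstep
        _ ≤ (2/b^5)^2 := hfinal
    rw [eNorm, hsum]
    calc Real.sqrt ((t1 - t2)^2 + (t1^2 - t2^2)^2)
        ≤ Real.sqrt ((2/b^5)^2) := Real.sqrt_le_sqrt key
      _ = 2/b^5 := Real.sqrt_sq (by positivity)
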